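/- arXiv:1102.2358 — 3 statements merged into one kernel-verified Lean document; each statement's English description precedes it below -/
import Mathlib

section
/- Key recovery in Stage 2: with C' = S·K'·S', D' = R·S·K'·S'·R', E' = R·K'·R' for R = diag(R₁₁, I₂), R' = diag(R'₁₁, I₂) (R₁₁, R'₁₁ ∈ GL₂(F)) and S = diag(I₂, S₂₂), S' = diag(I₂, S'₂₂) (S₂₂, S'₂₂ ∈ GL₂(F)), the blocks satisfy: K'₁₁ = C'₁₁, K'₂₂ = E'₂₂, and for any X ∈ Mat₂(F) with X·D'₁₂ = C'₁₂ we have X·E'₁₂ = K'₁₂, and for any Y with D'₂₁·Y = C'₂₁ we have E'₂₁·Y = K'₂₁. -/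
/-! Two-sided multiplication by block-diagonal matrices acts blockwise, and `R`, `S` act on
different blocks, so `C'` keeps `K'₁₁` and `E'` keeps `K'₂₂`. Since `D' = R C' R'`, we get
`D'₁₂ = R₁₁ K'₁₂ S'₂₂` and `C'₁₂ = K'₁₂ S'₂₂`; cancelling the invertible `S'₂₂` turns
`X D'₁₂ = C'₁₂` into `X E'₁₂ = K'₁₂`. The `₂₁` block is symmetric. -/

open Matrix

theorem fromBlocks_zero_zero_mul_mul_fromBlocks_zero_zero
    {m n : Type*} [Fintype m] [Fintype n] {α : Type*} [Semiring α]
    (A A' : Matrix m m α) (D D' : Matrix n n α) (K : Matrix (m ⊕ n) (m ⊕ n) α) :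
    fromBlocks A 0 0 D * K * fromBlocks A' 0 0 D' =
      fromBlocks (A * K.toBlocks₁₁ * A') (A * K.toBlocks₁₂ * D')
        (D * K.toBlocks₂₁ * A') (D * K.toBlocks₂₂ * D') := by
  conv_lhs => rw [← fromBlocks_toBlocks K]
  simp only [fromBlocks_multiply, Matrix.mul_zero, Matrix.zero_mul, add_zero, zero_add]

theorem stmt_9 {F : Type*} [Field F]
    (K' : Matrix (Fin 2 ⊕ Fin 2) (Fin 2 ⊕ Fin 2) F)
    (R₁₁ R'₁₁ S₂₂ S'₂₂ : GL (Fin 2) F)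
    (R R' S S' : Matrix (Fin 2 ⊕ Fin 2) (Fin 2 ⊕ Fin 2) F)
    (hR : R = Matrix.fromBlocks (R₁₁ : Matrix (Fin 2) (Fin 2) F) 0 0 1)
    (hR' : R' = Matrix.fromBlocks (R'₁₁ : Matrix (Fin 2) (Fin 2) F) 0 0 1)
    (hS : S = Matrix.fromBlocks 1 0 0 (S₂₂ : Matrix (Fin 2) (Fin 2) F))
    (hS' : S' = Matrix.fromBlocks 1 0 0 (S'₂₂ : Matrix (Fin 2) (Fin 2) F))
    (C' D' E' : Matrix (Fin 2 ⊕ Fin 2) (Fin 2 ⊕ Fin 2) F)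
    (hC' : C' = S * K' * S') (hD' : D' = R * S * K' * S' * R') (hE' : E' = R * K' * R') :
    K'.toBlocks₁₁ = C'.toBlocks₁₁ ∧
    K'.toBlocks₂₂ = E'.toBlocks₂₂ ∧
    (∀ X : Matrix (Fin 2) (Fin 2) F, X * D'.toBlocks₁₂ = C'.toBlocks₁₂ →
      X * E'.toBlocks₁₂ = K'.toBlocks₁₂) ∧
    (∀ Y : Matrix (Fin 2) (Fin 2) F, D'.toBlocks₂₁ * Y = C'.toBlocks₂₁ →
      E'.toBlocks₂₁ * Y = K'.toBlocks₂₁) := by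
  have hD'C' : D' = R * C' * R' := by simp only [hD', hC', Matrix.mul_assoc]
  subst hD'C' hC' hE' hR hR' hS hS'
  simp only [fromBlocks_zero_zero_mul_mul_fromBlocks_zero_zero, toBlocks_fromBlocks₁₁,
    toBlocks_fromBlocks₁₂, toBlocks_fromBlocks₂₁, toBlocks_fromBlocks₂₂,
    Matrix.one_mul, Matrix.mul_one]
  refine ⟨trivial, trivial, fun X hX => ?_, fun Y hY => ?_⟩
  · rw [← Matrix.mul_assoc, ← Matrix.mul_assoc, Units.mul_left_inj] at hX
    rwa [← Matrix.mul_assoc]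
  · rwa [Matrix.mul_assoc, Matrix.mul_assoc, Units.mul_right_inj, ← Matrix.mul_assoc] at hY
end

section
/- HKS linearization attack correctness: let J, K ∈ Mat_m(F), b ∈ F^m, f(x) = x + ⋯ + x^{n−1}, with f(J)f(K) = f(K)f(J), and set w_A = f(J)b, w_B = f(K)b, k = f(J)f(K)b. If X ∈ Mat_m(F) satisfies X·b = w_A and X·f(K) = f(K)·X, then X·w_B = k. -/
open Matrix

theorem Matrix.mulVec_mulVec_eq_mul_mulVec_of_commute {ι R : Type*} [Fintype ι]
    [NonUnitalSemiring R] {X A B : Matrix ι ι R} {v : ι → R} (hXB : Commute X B) (hAB : Commute A B)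
    (hX : X *ᵥ v = A *ᵥ v) : X *ᵥ (B *ᵥ v) = (A * B) *ᵥ v := by
  calc X *ᵥ (B *ᵥ v) = B *ᵥ (X *ᵥ v) := by rw [mulVec_mulVec, hXB.eq, ← mulVec_mulVec]
    _ = B *ᵥ (A *ᵥ v) := by rw [hX]
    _ = (A * B) *ᵥ v := by rw [mulVec_mulVec, hAB.eq]

theorem stmt_15_general {F : Type*} [Field F] {m : ℕ}
    (b : Fin m → F)
    (fJ fK : Matrix (Fin m) (Fin m) F)
    (hcomm : fJ * fK = fK * fJ)
    (wA wB k : Fin m → F) (hwA : wA = fJ.mulVec b) (hwB : wB = fK.mulVec b)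
    (hk : k = (fJ * fK).mulVec b)
    (X : Matrix (Fin m) (Fin m) F)
    (hXb : X.mulVec b = wA) (hXcomm : X * fK = fK * X) :
    X.mulVec wB = k := by
  subst hwA hwB hk
  exact mulVec_mulVec_eq_mul_mulVec_of_commute hXcomm hcomm hXb

theorem stmt_15 {F : Type*} [Field F] {m n : ℕ}
    (J K : Matrix (Fin m) (Fin m) F) (b : Fin m → F)
    (fJ fK : Matrix (Fin m) (Fin m) F)
    (hfJ : fJ = ∑ i ∈ Finset.Ico 1 n, J ^ i)
    (hfK : fK = ∑ i ∈ Finset.Ico 1 n, K ^ i)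
    (hcomm : fJ * fK = fK * fJ)
    (wA wB k : Fin m → F) (hwA : wA = fJ.mulVec b) (hwB : wB = fK.mulVec b)
    (hk : k = (fJ * fK).mulVec b)
    (X : Matrix (Fin m) (Fin m) F)
    (hXb : X.mulVec b = wA) (hXcomm : X * fK = fK * X) :
    X.mulVec wB = k :=
  stmt_15_general b fJ fK hcomm wA wB k hwA hwB hk X hXb hXcomm
end

section
/- RU linearization attack correctness: let C, D ∈ Mat_n(F) commute, d ∈ F^n, f_A, f_B ∈ F[x,y], w_A = f_A(C,D)d, w_B = f_B(C,D)d, and k = f_A(C,D)f_B(C,D)d. If X ∈ Mat_n(F) satisfies XC = CX, XD = DX, and Xd = w_A, then X·w_B = k. -/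
open Matrix

/-- Evaluation of a bivariate polynomial at a pair of matrices. -/
noncomputable def evalMat {R : Type*} [CommRing R] {n : ℕ}
    (f : MvPolynomial (Fin 2) R) (C D : Matrix (Fin n) (Fin n) R) :
    Matrix (Fin n) (Fin n) R :=
  ∑ d ∈ f.support, MvPolynomial.coeff d f • (C ^ d 0 * D ^ d 1)

/-! A matrix commuting with `C` and `D` commutes with every polynomial in `C` and `D`; hence
`X f_B(C,D) d = f_B(C,D) X d = f_B(C,D) f_A(C,D) d`, and the two polynomial factors commute. -/

namespace Commute

variable {R : Type*} [CommRing R] {n : ℕ} {C D X : Matrix (Fin n) (Fin n) R}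

theorem evalMat_right (hXC : Commute X C) (hXD : Commute X D) (f : MvPolynomial (Fin 2) R) :
    Commute X (evalMat f C D) :=
  Commute.sum_right _ _ _ fun _ _ => ((hXC.pow_right _).mul_right (hXD.pow_right _)).smul_right _

theorem evalMat_evalMat (hCD : Commute C D) (f g : MvPolynomial (Fin 2) R) :
    Commute (evalMat f C D) (evalMat g C D) :=
  evalMat_right ((Commute.refl C).evalMat_right hCD f).symm
    (hCD.symm.evalMat_right (Commute.refl D) f).symm g

theorem mulVec_mulVec_comm {A B : Matrix (Fin n) (Fin n) R} (h : Commute A B) (v : Fin n → R) :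
    A *ᵥ (B *ᵥ v) = B *ᵥ (A *ᵥ v) := by
  rw [mulVec_mulVec, mulVec_mulVec, h.eq]

end Commute

theorem stmt_18 {F : Type*} [Field F] {n : ℕ}
    (C D : Matrix (Fin n) (Fin n) F) (hCD : C * D = D * C)
    (d : Fin n → F) (fA fB : MvPolynomial (Fin 2) F)
    (wA wB k : Fin n → F)
    (hwA : wA = (evalMat fA C D).mulVec d) (hwB : wB = (evalMat fB C D).mulVec d)
    (hk : k = (evalMat fA C D * evalMat fB C D).mulVec d)
    (X : Matrix (Fin n) (Fin n) F)
    (hXC : X * C = C * X) (hXD : X * D = D * X) (hXd : X.mulVec d = wA) :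
    X.mulVec wB = k := by
  rw [hwB, hk, Commute.mulVec_mulVec_comm (Commute.evalMat_right hXC hXD fB), hXd, hwA,
    mulVec_mulVec, (Commute.evalMat_evalMat hCD fB fA).eq]
end
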